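/- Let n ≥ 1, let p_n(i,j) = 1/(i−j) for i ≠ j and 0 otherwise, and suppose F : ℝ^n ⊗ ℝ^n → ℝ is the linear functional determined by F(e_i ⊗ e_j) = p_n(i,j) for the pairing with the diagonal-with-summing-basis tensor u = ∑_{i=1}^n e_i ⊗ s_i (where s_i = ∑_{j=1}^i e_j). Then F(u) = ∑_{i=1}^n ∑_{j=1}^i p_n(i,j) ≥ (1/2) n log n. -/

import Mathlib

/-!
Row `i` of `p_n` below the diagonal is `1/i + 1/(i-1) + ⋯ + 1/1 = H_i ≥ log (i + 1)`, so the
lower-triangular sum is at least `∑_{i<n} log (i + 1) = log n!`. Pairing the factors `i + 1` and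
`n - i` of `n!²`, each pair has product at least `n`, hence `n!² ≥ nⁿ` and `log n! ≥ (n/2) log n`.
-/

noncomputable def pMat (n : ℕ) : Matrix (Fin n) (Fin n) ℝ :=
  fun i j => if i = j then 0 else 1 / ((i : ℝ) - (j : ℝ))

open Finset Real
open scoped Nat

theorem Nat.pow_self_le_factorial_sq (n : ℕ) : n ^ n ≤ n ! ^ 2 := by
  have hreflect : ∏ i ∈ range n, (n - i) = n ! := by
    rw [← prod_range_add_one_eq_factorial, ← prod_range_reflect]
    exact prod_congr rfl fun i hi => by have := mem_range.1 hi; omega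
  calc n ^ n = ∏ _i ∈ range n, n := by rw [prod_const, card_range]
    _ ≤ ∏ i ∈ range n, (i + 1) * (n - i) := by
      refine prod_le_prod' fun i hi => ?_
      obtain ⟨k, rfl⟩ := Nat.exists_eq_add_of_lt (mem_range.1 hi)
      rw [show i + k + 1 - i = k + 1 by omega]
      nlinarith
    _ = n ! ^ 2 := by rw [prod_mul_distrib, prod_range_add_one_eq_factorial, hreflect, sq]

theorem Real.half_mul_log_le_log_factorial (n : ℕ) : n / 2 * log n ≤ log (n ! : ℝ) := by
  have h : log ((n : ℝ) ^ n) ≤ log ((n ! : ℝ) ^ 2) :=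
    log_le_log (by exact_mod_cast Nat.pow_self_pos)
      (by exact_mod_cast Nat.pow_self_le_factorial_sq n)
  rw [log_pow, log_pow] at h
  push_cast at h
  linarith

theorem Real.log_factorial_eq_sum_log (n : ℕ) :
    log (n ! : ℝ) = ∑ i : Fin n, log ((i + 1 : ℕ) : ℝ) := by
  rw [← prod_range_add_one_eq_factorial, Nat.cast_prod, log_prod (fun i _ => by positivity),
    Fin.sum_univ_eq_sum_range (fun i => log ((i + 1 : ℕ) : ℝ))]

theorem sum_range_one_div_sub_eq_harmonic (m : ℕ) :
    ∑ k ∈ range m, 1 / ((m : ℝ) - k) = harmonic m := by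
  rw [← sum_range_reflect, harmonic]
  push_cast
  refine sum_congr rfl fun k hk => ?_
  have hkm := mem_range.1 hk
  rw [Nat.cast_sub (by omega), Nat.cast_sub (by omega)]
  push_cast
  ring

theorem sum_Iic_pMat_eq_harmonic {n : ℕ} (i : Fin n) :
    ∑ j ∈ Iic i, pMat n i j = harmonic i := by
  rw [← Iio_insert, sum_insert notMem_Iio_self, pMat, if_pos rfl, zero_add,
    ← sum_range_one_div_sub_eq_harmonic, ← Nat.Iio_eq_range, ← Fin.map_valEmbedding_Iio, sum_map]
  refine sum_congr rfl fun j hj => ?_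
  simp [pMat, (mem_Iio.1 hj).ne']

theorem hilbert_functional_eval_general (n : ℕ)
    (F : (Fin n → ℝ) →ₗ[ℝ] (Fin n → ℝ) →ₗ[ℝ] ℝ)
    (hF : ∀ i j : Fin n, F (Pi.single i 1) (Pi.single j 1) = pMat n i j) :
    (∑ i : Fin n, F (Pi.single i 1) (∑ j ∈ Finset.univ.filter (· ≤ i), Pi.single j 1)) =
        (∑ i : Fin n, ∑ j ∈ Finset.univ.filter (· ≤ i), pMat n i j) ∧
      (1/2 : ℝ) * n * Real.log n ≤
        ∑ i : Fin n, ∑ j ∈ Finset.univ.filter (· ≤ i), pMat n i j := by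
  refine ⟨sum_congr rfl fun i _ => by simp only [map_sum, hF], ?_⟩
  calc (1/2 : ℝ) * n * log n ≤ log (n ! : ℝ) := by
        linarith [half_mul_log_le_log_factorial n]
    _ = ∑ i : Fin n, log ((i + 1 : ℕ) : ℝ) := log_factorial_eq_sum_log n
    _ ≤ ∑ i : Fin n, (harmonic i : ℝ) := sum_le_sum fun i _ => log_add_one_le_harmonic i
    _ = _ := by
      refine sum_congr rfl fun i _ => ?_
      rw [filter_ge_eq_Iic, sum_Iic_pMat_eq_harmonic]

/-- Evaluating the functional determined by the permuted Hilbert matrix at the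
tensor `∑ e_i ⊗ s_i` (`s_i` the summing basis) gives the lower-triangular sum of
`p_n`, which is at least `(1/2) n log n`. -/
theorem hilbert_functional_eval (n : ℕ) (hn : 1 ≤ n)
    (F : (Fin n → ℝ) →ₗ[ℝ] (Fin n → ℝ) →ₗ[ℝ] ℝ)
    (hF : ∀ i j : Fin n, F (Pi.single i 1) (Pi.single j 1) = pMat n i j) :
    (∑ i : Fin n, F (Pi.single i 1) (∑ j ∈ Finset.univ.filter (· ≤ i), Pi.single j 1)) =
        (∑ i : Fin n, ∑ j ∈ Finset.univ.filter (· ≤ i), pMat n i j) ∧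
      (1/2 : ℝ) * n * Real.log n ≤
        ∑ i : Fin n, ∑ j ∈ Finset.univ.filter (· ≤ i), pMat n i j :=
  hilbert_functional_eval_general n F hF
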